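/- arXiv:1906.01367 — 4 statements merged into one kernel-verified Lean document; each statement's English description precedes it below -/
import Mathlib

section
/- Let X be a real Hilbert space, J : X → X* the Riesz duality map (⟨J x, y⟩ = ⟪x, y⟫_X), B : X → X* a continuous linear symmetric monotone operator, and ε > 0. Then the bilinear form (u, v)_* := ⟨(ε J + B)^{-1} u, v⟩ on X* is an inner product (it is bilinear, symmetric, and positive definite), and its induced norm |u|_* = (u, u)_*^{1/2} is equivalent to the dual norm: there exist constants m, M > 0 such that m ‖u‖_{X*} ≤ |u|_* ≤ M ‖u‖_{X*} for all u ∈ X*. -/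
/-!
Write `A = εJ + B`, so that `A (T u) = u`. Evaluating this identity at `T v` gives
`v (T u) = ε ⟪T u, T v⟫ + B (T u) (T v)`, which is symmetric in `u, v` because `B` is, and
`u (T u) = ε ‖T u‖² + B (T u) (T u) ≥ ε ‖T u‖²` because `B` is monotone. The upper bound
`u (T u) ≤ ‖T‖ ‖u‖²` is the continuity of `T`; the lower bound combines `ε ‖T u‖² ≤ u (T u)`
with the continuity of `A`, namely `‖u‖ = ‖A (T u)‖ ≤ (ε + ‖B‖) ‖T u‖`.
-/

open RealInnerProductSpace

namespace ShiftedRieszInverse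

theorem apply_self_le_opNorm_mul_sq {E : Type*} [NormedAddCommGroup E] [NormedSpace ℝ E]
    (T : (E →L[ℝ] ℝ) →L[ℝ] E) (u : E →L[ℝ] ℝ) :
    u (T u) ≤ ‖T‖ * ‖u‖ ^ 2 :=
  calc u (T u) ≤ ‖u‖ * ‖T u‖ := (le_abs_self _).trans (u.le_opNorm _)
    _ ≤ ‖u‖ * (‖T‖ * ‖u‖) := by gcongr; exact T.le_opNorm u
    _ = ‖T‖ * ‖u‖ ^ 2 := by ring

variable {X : Type*} [NormedAddCommGroup X] [InnerProductSpace ℝ X]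

theorem norm_smul_innerSL_add_le (B : X →L[ℝ] (X →L[ℝ] ℝ)) (ε : ℝ) (x : X) :
    ‖ε • (innerSL ℝ x : X →L[ℝ] ℝ) + B x‖ ≤ (|ε| + ‖B‖) * ‖x‖ :=
  calc ‖ε • (innerSL ℝ x : X →L[ℝ] ℝ) + B x‖
      ≤ ‖ε • (innerSL ℝ x : X →L[ℝ] ℝ)‖ + ‖B x‖ := norm_add_le _ _
    _ ≤ |ε| * ‖x‖ + ‖B‖ * ‖x‖ := by
        rw [norm_smul, innerSL_apply_norm, Real.norm_eq_abs]
        gcongr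
        exact B.le_opNorm x
    _ = (|ε| + ‖B‖) * ‖x‖ := by ring

section RightInverse

variable {B : X →L[ℝ] (X →L[ℝ] ℝ)} {ε : ℝ} {T : (X →L[ℝ] ℝ) →L[ℝ] X}
  (hT : ∀ f : X →L[ℝ] ℝ, ε • (innerSL ℝ (T f) : X →L[ℝ] ℝ) + B (T f) = f)

include hT

theorem apply_eq (u : X →L[ℝ] ℝ) (y : X) : u y = ε * ⟪T u, y⟫ + B (T u) y := by
  conv_lhs => rw [← hT u]
  rfl

theorem apply_comm (hsymm : ∀ x y : X, B x y = B y x) (u v : X →L[ℝ] ℝ) :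
    v (T u) = u (T v) := by
  rw [apply_eq hT v, apply_eq hT u, real_inner_comm, hsymm]

theorem mul_norm_sq_le_apply_self (hmono : ∀ x : X, 0 ≤ B x x) (u : X →L[ℝ] ℝ) :
    ε * ‖T u‖ ^ 2 ≤ u (T u) := by
  rw [apply_eq hT u, real_inner_self_eq_norm_sq]
  linarith [hmono (T u)]

theorem apply_self_nonneg (hmono : ∀ x : X, 0 ≤ B x x) (hε : 0 ≤ ε) (u : X →L[ℝ] ℝ) :
    0 ≤ u (T u) :=
  (by positivity : 0 ≤ ε * ‖T u‖ ^ 2).trans (mul_norm_sq_le_apply_self hT hmono u)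

theorem eq_zero_of_map_eq_zero {u : X →L[ℝ] ℝ} (hu : T u = 0) : u = 0 := by
  simpa [hu] using (hT u).symm

theorem apply_self_pos (hmono : ∀ x : X, 0 ≤ B x x) (hε : 0 < ε) {u : X →L[ℝ] ℝ}
    (hu : u ≠ 0) : 0 < u (T u) := by
  have hTu : 0 < ‖T u‖ := norm_pos_iff.mpr fun h => hu (eq_zero_of_map_eq_zero hT h)
  exact lt_of_lt_of_le (by positivity) (mul_norm_sq_le_apply_self hT hmono u)

theorem norm_le_mul_norm_map (hε : 0 ≤ ε) (u : X →L[ℝ] ℝ) : ‖u‖ ≤ (ε + ‖B‖) * ‖T u‖ := by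
  simpa [hT u, abs_of_nonneg hε] using norm_smul_innerSL_add_le B ε (T u)

theorem mul_norm_le_sqrt_apply_self (hmono : ∀ x : X, 0 ≤ B x x) (hε : 0 < ε)
    (u : X →L[ℝ] ℝ) : √ε / (ε + ‖B‖) * ‖u‖ ≤ √(u (T u)) := by
  have hεB : 0 < ε + ‖B‖ := by positivity
  rw [Real.le_sqrt (by positivity) (apply_self_nonneg hT hmono hε.le u)]
  calc (√ε / (ε + ‖B‖) * ‖u‖) ^ 2 = ε * (‖u‖ / (ε + ‖B‖)) ^ 2 := by
        rw [div_mul_eq_mul_div, mul_div_assoc, mul_pow, Real.sq_sqrt hε.le]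
    _ ≤ ε * ‖T u‖ ^ 2 := by
        gcongr
        rw [div_le_iff₀ hεB, mul_comm]
        exact norm_le_mul_norm_map hT hε.le u
    _ ≤ u (T u) := mul_norm_sq_le_apply_self hT hmono u

end RightInverse

end ShiftedRieszInverse

open ShiftedRieszInverse

theorem statement_3_general
    {X : Type*} [NormedAddCommGroup X] [InnerProductSpace ℝ X]
    (B : X →L[ℝ] (X →L[ℝ] ℝ))
    (hsymm : ∀ x y : X, B x y = B y x)
    (hmono : ∀ x : X, 0 ≤ B x x)
    (ε : ℝ) (hε : 0 < ε)
    -- T = (εJ + B)⁻¹ : X* → X, the continuous inverse of εJ + B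
    (T : (X →L[ℝ] ℝ) →L[ℝ] X)
    (hT₂ : ∀ f : X →L[ℝ] ℝ, ε • (innerSL ℝ (T f) : X →L[ℝ] ℝ) + B (T f) = f) :
    -- (u,v)_* := v (T u) is symmetric ...
    (∀ u v : X →L[ℝ] ℝ, v (T u) = u (T v)) ∧
    -- ... bilinear (it is linear in each argument; linearity in the first one
    -- is the nontrivial half, the second being linear by definition) ...
    (∀ (a : ℝ) (u u' v : X →L[ℝ] ℝ),
      v (T (a • u + u')) = a * v (T u) + v (T u')) ∧
    (∀ (a : ℝ) (u v v' : X →L[ℝ] ℝ),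
      (a • v + v') (T u) = a * v (T u) + v' (T u)) ∧
    -- ... and positive definite ...
    (∀ u : X →L[ℝ] ℝ, 0 ≤ u (T u)) ∧
    (∀ u : X →L[ℝ] ℝ, u ≠ 0 → 0 < u (T u)) ∧
    -- ... and the induced norm |u|_* = (u,u)_*^{1/2} is equivalent to ‖·‖_{X*}
    (∃ m M : ℝ, 0 < m ∧ 0 < M ∧ ∀ u : X →L[ℝ] ℝ,
      m * ‖u‖ ≤ Real.sqrt (u (T u)) ∧ Real.sqrt (u (T u)) ≤ M * ‖u‖) := by
  refine ⟨apply_comm hT₂ hsymm, fun a u u' v => by simp, fun a u v v' => by simp,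
    apply_self_nonneg hT₂ hmono hε.le, fun u => apply_self_pos hT₂ hmono hε, ?_⟩
  refine ⟨√ε / (ε + ‖B‖), √(‖T‖ + 1), by positivity, by positivity, fun u =>
    ⟨mul_norm_le_sqrt_apply_self hT₂ hmono hε u, ?_⟩⟩
  rw [Real.sqrt_le_left (by positivity), mul_pow, Real.sq_sqrt (by positivity)]
  linarith [apply_self_le_opNorm_mul_sq T u, sq_nonneg ‖u‖]

theorem statement_3
    {X : Type*} [NormedAddCommGroup X] [InnerProductSpace ℝ X] [CompleteSpace X]
    (B : X →L[ℝ] (X →L[ℝ] ℝ))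
    (hsymm : ∀ x y : X, B x y = B y x)
    (hmono : ∀ x : X, 0 ≤ B x x)
    (ε : ℝ) (hε : 0 < ε)
    -- T = (εJ + B)⁻¹ : X* → X, the continuous inverse of εJ + B
    (T : (X →L[ℝ] ℝ) →L[ℝ] X)
    (hT₁ : ∀ x : X, T (ε • (innerSL ℝ x : X →L[ℝ] ℝ) + B x) = x)
    (hT₂ : ∀ f : X →L[ℝ] ℝ, ε • (innerSL ℝ (T f) : X →L[ℝ] ℝ) + B (T f) = f) :
    -- (u,v)_* := v (T u) is symmetric ...
    (∀ u v : X →L[ℝ] ℝ, v (T u) = u (T v)) ∧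
    -- ... bilinear (it is linear in each argument; linearity in the first one
    -- is the nontrivial half, the second being linear by definition) ...
    (∀ (a : ℝ) (u u' v : X →L[ℝ] ℝ),
      v (T (a • u + u')) = a * v (T u) + v (T u')) ∧
    (∀ (a : ℝ) (u v v' : X →L[ℝ] ℝ),
      (a • v + v') (T u) = a * v (T u) + v' (T u)) ∧
    -- ... and positive definite ...
    (∀ u : X →L[ℝ] ℝ, 0 ≤ u (T u)) ∧
    (∀ u : X →L[ℝ] ℝ, u ≠ 0 → 0 < u (T u)) ∧
    -- ... and the induced norm |u|_* = (u,u)_*^{1/2} is equivalent to ‖·‖_{X*}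
    (∃ m M : ℝ, 0 < m ∧ 0 < M ∧ ∀ u : X →L[ℝ] ℝ,
      m * ‖u‖ ≤ Real.sqrt (u (T u)) ∧ Real.sqrt (u (T u)) ≤ M * ‖u‖) :=
  statement_3_general B hsymm hmono ε hε T hT₂
end

section
/- Let (Ω, μ) be a finite measure space and let θ_n : Ω → ℝ be a sequence of μ-integrable functions such that: (a) liminf_n θ_n(t) ≥ 0 for μ-almost every t ∈ Ω; (b) limsup_n ∫_Ω θ_n dμ ≤ 0; (c) the negative parts θ_n⁻ = max(−θ_n, 0) form a uniformly integrable family, i.e. sup_n ∫_Ω θ_n⁻ dμ < ∞ and for every δ > 0 there exists η > 0 such that μ(E) < η implies ∫_E θ_n⁻ dμ < δ for all n. Then θ_n → 0 in L¹(μ), i.e. ∫_Ω |θ_n| dμ → 0 as n → ∞. -/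
/-!
Since `θ⁻ₙ → 0` almost everywhere by (a) and the `θ⁻ₙ` are uniformly integrable on a finite
measure space, Vitali's convergence theorem gives `∫ θ⁻ₙ → 0`. As `∫ θₙ ≥ -∫ θ⁻ₙ`, together with
(b) this forces `∫ θₙ → 0`, and then `∫ |θₙ| = ∫ θₙ + 2 ∫ θ⁻ₙ → 0`.
-/

open MeasureTheory Filter Topology

section Sequences

variable {ι : Type*} {l : Filter ι}

theorem tendsto_max_neg_zero_of_liminf_nonneg {u : ι → ℝ}
    (hu : (0 : EReal) ≤ liminf (fun i => (u i : EReal)) l) :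
    Tendsto (fun i => max (-u i) 0) l (𝓝 0) := by
  refine tendsto_order.2 ⟨fun a ha => .of_forall fun i => ha.trans_le (le_max_right _ _),
    fun a ha => ?_⟩
  have h : ((-a : ℝ) : EReal) < liminf (fun i => (u i : EReal)) l :=
    lt_of_lt_of_le (by exact_mod_cast neg_neg_of_pos ha) hu
  filter_upwards [eventually_lt_of_lt_liminf h] with i hi
  exact max_lt (by linarith [EReal.coe_lt_coe_iff.1 hi]) ha

theorem tendsto_zero_of_limsup_le_zero_of_neg_le {a b : ι → ℝ} (hb : Tendsto b l (𝓝 0))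
    (hba : ∀ i, -b i ≤ a i) (ha : limsup (fun i => (a i : EReal)) l ≤ 0) :
    Tendsto a l (𝓝 0) := by
  refine tendsto_order.2 ⟨fun c hc => ?_, fun c hc => ?_⟩
  · filter_upwards [(tendsto_order.1 hb).2 (-c) (neg_pos.2 hc)] with i hi
    linarith [hba i]
  · have h : limsup (fun i => (a i : EReal)) l < (c : EReal) :=
      ha.trans_lt (by exact_mod_cast hc)
    filter_upwards [eventually_lt_of_limsup_lt h] with i hi
    exact_mod_cast hi

end Sequences

section UniformIntegrability

variable {ι Ω β : Type*} [MeasurableSpace Ω] {μ : Measure Ω} [NormedAddCommGroup β]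

theorem unifIntegrable_one_of_forall_setIntegral_norm_lt {f : ι → Ω → β}
    (hf : ∀ i, Integrable (f i) μ)
    (h : ∀ δ : ℝ, 0 < δ → ∃ η : ℝ, 0 < η ∧ ∀ E : Set Ω, MeasurableSet E →
      μ E < ENNReal.ofReal η → ∀ i, ∫ t in E, ‖f i t‖ ∂μ < δ) :
    UnifIntegrable f 1 μ := by
  intro ε hε
  obtain ⟨η, hη, hE⟩ := h ε hε
  refine ⟨η / 2, half_pos hη, fun i s hs hμs => ?_⟩
  have hμs' : μ s < ENNReal.ofReal η :=
    hμs.trans_lt ((ENNReal.ofReal_lt_ofReal_iff hη).2 (half_lt_self hη))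
  rw [eLpNorm_indicator_eq_eLpNorm_restrict hs, eLpNorm_one_eq_lintegral_enorm,
    ← ofReal_integral_norm_eq_lintegral_enorm (hf i).integrableOn]
  exact ENNReal.ofReal_le_ofReal (hE s hs hμs' i).le

variable [NormedSpace ℝ β] [IsFiniteMeasure μ]

theorem tendsto_integral_of_unifIntegrable_of_tendsto_ae {f : ℕ → Ω → β} {g : Ω → β}
    (hf : ∀ n, Integrable (f n) μ) (hg : Integrable g μ) (hui : UnifIntegrable f 1 μ)
    (hfg : ∀ᵐ t ∂μ, Tendsto (fun n => f n t) atTop (𝓝 (g t))) :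
    Tendsto (fun n => ∫ t, f n t ∂μ) atTop (𝓝 (∫ t, g t ∂μ)) :=
  tendsto_integral_of_L1' g hg.aestronglyMeasurable (.of_forall hf)
    (tendsto_Lp_finite_of_tendsto_ae le_rfl ENNReal.one_ne_top
      (fun n => (hf n).aestronglyMeasurable) (memLp_one_iff_integrable.2 hg) hui hfg)

end UniformIntegrability

theorem abs_eq_add_two_mul_max_neg_zero (x : ℝ) : |x| = x + 2 * max (-x) 0 := by
  rcases le_total 0 x with hx | hx
  · rw [abs_of_nonneg hx, max_eq_right (neg_nonpos.2 hx)]; ring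
  · rw [abs_of_nonpos hx, max_eq_left (neg_nonneg.2 hx)]; ring

theorem integral_abs_eq_integral_add_two_mul_integral_max_neg_zero {Ω : Type*}
    [MeasurableSpace Ω] {μ : Measure Ω} {f : Ω → ℝ} (hf : Integrable f μ) :
    ∫ t, |f t| ∂μ = ∫ t, f t ∂μ + 2 * ∫ t, max (-f t) 0 ∂μ := by
  simp_rw [abs_eq_add_two_mul_max_neg_zero]
  rw [integral_add hf (hf.neg_part.const_mul 2), integral_const_mul]

theorem statement_7_general
    {Ω : Type*} [MeasurableSpace Ω] (μ : Measure Ω) [IsFiniteMeasure μ]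
    (θ : ℕ → Ω → ℝ)
    (hint : ∀ n, Integrable (θ n) μ)
    -- (a) liminf_n θ_n(t) ≥ 0 for μ-a.e. t
    (ha : ∀ᵐ t ∂μ, (0 : EReal) ≤ liminf (fun n => ((θ n t : ℝ) : EReal)) atTop)
    -- (b) limsup_n ∫ θ_n dμ ≤ 0
    (hb : limsup (fun n => ((∫ t, θ n t ∂μ : ℝ) : EReal)) atTop ≤ 0)
    -- (c) the negative parts form a uniformly integrable family:
    -- ... and ∀ δ > 0 ∃ η > 0 such that μ(E) < η implies ∫_E θ_n⁻ dμ < δ for all n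
    (hui : ∀ δ : ℝ, 0 < δ → ∃ η : ℝ, 0 < η ∧ ∀ E : Set Ω, MeasurableSet E →
      μ E < ENNReal.ofReal η → ∀ n, ∫ t in E, max (-(θ n t)) 0 ∂μ < δ) :
    Tendsto (fun n => ∫ t, |θ n t| ∂μ) atTop (nhds 0) := by
  have hneg_int : ∀ n, Integrable (fun t => max (-θ n t) 0) μ := fun n => (hint n).neg_part
  have hneg_ui : UnifIntegrable (fun n t => max (-θ n t) 0) 1 μ :=
    unifIntegrable_one_of_forall_setIntegral_norm_lt hneg_int <| by
      simpa only [Real.norm_of_nonneg (le_max_right _ 0)] using hui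
  have hneg_ae : ∀ᵐ t ∂μ, Tendsto (fun n => max (-θ n t) 0) atTop (𝓝 0) := by
    filter_upwards [ha] with t ht using tendsto_max_neg_zero_of_liminf_nonneg ht
  have hneg : Tendsto (fun n => ∫ t, max (-θ n t) 0 ∂μ) atTop (𝓝 0) := by
    simpa using tendsto_integral_of_unifIntegrable_of_tendsto_ae hneg_int
      (integrable_zero Ω ℝ μ) hneg_ui hneg_ae
  have hθ : Tendsto (fun n => ∫ t, θ n t ∂μ) atTop (𝓝 0) := by
    refine tendsto_zero_of_limsup_le_zero_of_neg_le hneg (fun n => ?_) hb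
    rw [← integral_neg]
    exact integral_mono (hneg_int n).neg (hint n) fun t => neg_le.1 (le_max_left _ _)
  simp_rw [integral_abs_eq_integral_add_two_mul_integral_max_neg_zero (hint _)]
  simpa using hθ.add (hneg.const_mul 2)

theorem statement_7
    {Ω : Type*} [MeasurableSpace Ω] (μ : Measure Ω) [IsFiniteMeasure μ]
    (θ : ℕ → Ω → ℝ)
    (hint : ∀ n, Integrable (θ n) μ)
    -- (a) liminf_n θ_n(t) ≥ 0 for μ-a.e. t
    (ha : ∀ᵐ t ∂μ, (0 : EReal) ≤ liminf (fun n => ((θ n t : ℝ) : EReal)) atTop)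
    -- (b) limsup_n ∫ θ_n dμ ≤ 0
    (hb : limsup (fun n => ((∫ t, θ n t ∂μ : ℝ) : EReal)) atTop ≤ 0)
    -- (c) the negative parts form a uniformly integrable family:
    -- sup_n ∫ θ_n⁻ dμ < ∞ ...
    (hsup : ∃ C : ℝ, ∀ n, ∫ t, max (-(θ n t)) 0 ∂μ ≤ C)
    -- ... and ∀ δ > 0 ∃ η > 0 such that μ(E) < η implies ∫_E θ_n⁻ dμ < δ for all n
    (hui : ∀ δ : ℝ, 0 < δ → ∃ η : ℝ, 0 < η ∧ ∀ E : Set Ω, MeasurableSet E →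
      μ E < ENNReal.ofReal η → ∀ n, ∫ t in E, max (-(θ n t)) 0 ∂μ < δ) :
    Tendsto (fun n => ∫ t, |θ n t| ∂μ) atTop (nhds 0) :=
  statement_7_general μ θ hint ha hb hui
end

section
/- Let (X, H, X*) be an evolution triple of Hilbert spaces with X compactly embedded in H, let T = [0,b], assume hypotheses H(B) and H(A), and fix ε > 0. If u ∈ W_p^{per}((0,b), V*) and v ∈ L^{p'}(T, V*) satisfy u'(t) + v(t) = 0 and v(t) ∈ A_ε(t, u(t)) for almost all t ∈ T, then the function y(t) = (ε J + B)^{-1} u(t) satisfies the a priori bound c₃ ∫₀ᵇ ‖y(t)‖_X^p dt ≤ ‖c₄‖_{L¹(T)}. -/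
/- STATEMENT 11: a priori bound for solutions of the approximate periodic problem:
if u ∈ W_p^per((0,b),V*) and v ∈ L^{p'}(T,V*) satisfy u' + v = 0 and
v(t) ∈ A_ε(t, u(t)) a.e., then y = (εJ+B)⁻¹ ∘ u satisfies
c₃ ∫₀ᵇ ‖y(t)‖_X^p dt ≤ ‖c₄‖_{L¹(T)}.

X* is realized as `X →L[ℝ] ℝ`, A_ε(t,w) = A t (T w) with T = (εJ+B)⁻¹.  The
membership u ∈ W_p^per with u' = −v is expressed through the continuous
representative: u(t) = u(0) − ∫₀ᵗ v(s) ds on [0,b] and u(0) = u(b). -/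

open MeasureTheory Filter Topology RealInnerProductSpace
open scoped ENNReal NNReal

set_option maxHeartbeats 1000000

theorem statement_11
    {X H : Type*} [NormedAddCommGroup X] [InnerProductSpace ℝ X] [CompleteSpace X]
    [NormedAddCommGroup H] [InnerProductSpace ℝ H] [CompleteSpace H]
    [TopologicalSpace.SeparableSpace X] [TopologicalSpace.SeparableSpace H]
    -- evolution triple of Hilbert spaces: e : X → H injective, continuous, dense range,
    -- and X is compactly embedded in H
    (e : X →L[ℝ] H) (he : Function.Injective e) (hdense : DenseRange e)
    (hcpt : IsCompactOperator e)
    (b : ℝ) (hb : 0 < b)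
    (p p' : ℝ) (hp : 2 ≤ p) (hconj : 1 / p + 1 / p' = 1)
    (A : ℝ → X → Set (X →L[ℝ] ℝ))
    -- H(A): nonempty, closed, convex values
    (hval : ∀ t ∈ Set.Icc (0:ℝ) b, ∀ x : X,
      (A t x).Nonempty ∧ IsClosed (A t x) ∧ Convex ℝ (A t x))
    -- H(A)(i): t ↦ A(t,x) is graph measurable (Lebesgue ⊗ Borel)
    (hmeas : ∀ x : X, MeasurableSet[MeasurableSpace.prod
      (inferInstance : MeasurableSpace (MeasureTheory.NullMeasurableSpace ℝ MeasureTheory.volume))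
      (borel (X →L[ℝ] ℝ))]
      {q : ℝ × (X →L[ℝ] ℝ) | q.1 ∈ Set.Icc (0:ℝ) b ∧ q.2 ∈ A q.1 x})
    -- H(A)(ii): for a.a. t ∈ T, x ↦ A(t,x) is pseudo-monotone (bounded and
    -- satisfying the pseudo-monotonicity limit condition; weak convergence in X is
    -- tested against X*, weak convergence in X* against X**)
    (hpm : ∀ᵐ t ∂(volume.restrict (Set.Icc (0:ℝ) b)),
      (∀ S : Set X, Bornology.IsBounded S → Bornology.IsBounded (⋃ x ∈ S, A t x)) ∧
      (∀ (y : ℕ → X) (ylim : X) (w : ℕ → X →L[ℝ] ℝ) (wlim : X →L[ℝ] ℝ),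
        (∀ f : X →L[ℝ] ℝ, Tendsto (fun n => f (y n)) atTop (nhds (f ylim))) →
        (∀ n, w n ∈ A t (y n)) →
        (∀ F : (X →L[ℝ] ℝ) →L[ℝ] ℝ, Tendsto (fun n => F (w n)) atTop (nhds (F wlim))) →
        limsup (fun n => w n (y n - ylim)) atTop ≤ 0 →
        wlim ∈ A t ylim ∧ Tendsto (fun n => w n (y n)) atTop (nhds (wlim ylim))))
    -- H(A)(iii): growth condition
    (c₁ : ℝ → ℝ) (c₂ : ℝ)
    (hc₁ : MemLp c₁ (ENNReal.ofReal p') (volume.restrict (Set.Icc (0:ℝ) b)))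
    (hc₂ : 0 < c₂)
    (hgrowth : ∀ᵐ t ∂(volume.restrict (Set.Icc (0:ℝ) b)), ∀ x : X, ∀ w ∈ A t x,
      ‖w‖ ≤ c₁ t + c₂ * ‖x‖ ^ (p - 1))
    -- H(A)(iv): coercivity condition
    (c₃ : ℝ) (c₄ : ℝ → ℝ) (hc₃ : 0 < c₃)
    (hc₄ : Integrable c₄ (volume.restrict (Set.Icc (0:ℝ) b)))
    (hcoercive : ∀ᵐ t ∂(volume.restrict (Set.Icc (0:ℝ) b)), ∀ x : X, ∀ w ∈ A t x,
      c₃ * ‖x‖ ^ p - c₄ t ≤ w x)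
    -- H(B): B ∈ L(X, X*) symmetric and monotone
    (B : X →L[ℝ] (X →L[ℝ] ℝ))
    (hBsymm : ∀ x y : X, B x y = B y x) (hBmono : ∀ x : X, 0 ≤ B x x)
    -- ε > 0 and T = (εJ + B)⁻¹ : X* → X, the continuous inverse of εJ + B
    -- (J = innerSL ℝ is the Riesz duality map of X)
    (ε : ℝ) (hε : 0 < ε)
    (T : (X →L[ℝ] ℝ) →L[ℝ] X)
    (hT₁ : ∀ x : X, T (ε • (innerSL ℝ x : X →L[ℝ] ℝ) + B x) = x)
    (hT₂ : ∀ f : X →L[ℝ] ℝ, ε • (innerSL ℝ (T f) : X →L[ℝ] ℝ) + B (T f) = f)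
    (u v : ℝ → X →L[ℝ] ℝ)
    (hu : MemLp u (ENNReal.ofReal p) (volume.restrict (Set.Icc (0:ℝ) b)))
    (hv : MemLp v (ENNReal.ofReal p') (volume.restrict (Set.Icc (0:ℝ) b)))
    (hrep : ∀ t ∈ Set.Icc (0:ℝ) b, u t = u 0 - ∫ s in (0:ℝ)..t, v s)
    (hper : u 0 = u b)
    (hsel : ∀ᵐ t ∂(volume.restrict (Set.Icc (0:ℝ) b)), v t ∈ A t (T (u t))) :
    c₃ * ∫ t in Set.Icc (0:ℝ) b, ‖T (u t)‖ ^ p ≤ ∫ t in Set.Icc (0:ℝ) b, |c₄ t| := by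
  classical
  set K : Set ℝ := Set.Icc (0:ℝ) b with hK
  set μ : Measure ℝ := volume.restrict K with hμdef
  haveI : IsFiniteMeasure μ := by
    constructor
    rw [hμdef, Measure.restrict_apply_univ, hK, Real.volume_Icc]
    exact ENNReal.ofReal_lt_top
  -- basic exponent facts
  have hp0 : (0:ℝ) < p := lt_of_lt_of_le two_pos hp
  have hhalf : 1 / p ≤ 1 / 2 := one_div_le_one_div_of_le two_pos hp
  have hp'pos : (0:ℝ) < p' := by
    by_contra h
    push_neg at h
    have h1 : 1 / p' ≤ 0 := one_div_nonpos.mpr h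
    have : (1:ℝ) ≤ 1 / p := by linarith [hconj]
    linarith
  have hp'1 : (1:ℝ) ≤ p' := by
    have h2 : 1 / p' ≤ 1 := by
      have : 0 < 1 / p := by positivity
      linarith [hconj]
    have := (div_le_one hp'pos).mp h2
    linarith
  have h1p : (1:ℝ≥0∞) ≤ ENNReal.ofReal p := by
    rw [← ENNReal.ofReal_one]
    exact ENNReal.ofReal_le_ofReal (le_trans one_le_two hp)
  have h1p' : (1:ℝ≥0∞) ≤ ENNReal.ofReal p' := by
    rw [← ENNReal.ofReal_one]
    exact ENNReal.ofReal_le_ofReal hp'1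
  have hui : Integrable u μ := hu.integrable h1p
  have hvi : Integrable v μ := hv.integrable h1p'
  -- symmetry of T in the duality pairing
  have hTsym : ∀ f g : X →L[ℝ] ℝ, f (T g) = g (T f) := by
    intro f g
    conv_lhs => rw [← hT₂ f]
    conv_rhs => rw [← hT₂ g]
    simp only [ContinuousLinearMap.add_apply, ContinuousLinearMap.smul_apply, innerSL_apply_apply,
      smul_eq_mul]
    rw [hBsymm (T f) (T g), real_inner_comm]
  -- the integral of v over [0, b] vanishes
  have hVb : (∫ s in (0:ℝ)..b, v s) = 0 := by
    have h := hrep b ⟨hb.le, le_rfl⟩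
    rw [← hper] at h
    exact sub_eq_self.mp h.symm
  have hμIoc : μ = volume.restrict (Set.Ioc 0 b) := by
    rw [hμdef, hK]
    exact (Measure.restrict_congr_set Ioc_ae_eq_Icc).symm
  have hVμ : (∫ t, v t ∂μ) = 0 := by
    rw [hμIoc, ← intervalIntegral.integral_of_le hb.le]
    exact hVb
  -- measurability facts
  have hvm : AEStronglyMeasurable v μ := hv.1
  have hum : AEStronglyMeasurable u μ := hu.1
  have happly : Continuous fun z : (X →L[ℝ] ℝ) × X => z.1 z.2 :=
    isBoundedBilinearMap_apply.continuous
  have hvTu_m : AEStronglyMeasurable (fun t => v t (T (u t))) μ :=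
    happly.comp_aestronglyMeasurable
      (hvm.prodMk (T.continuous.comp_aestronglyMeasurable hum))
  -- Hölder: v(T u) is integrable
  have hPQ : 1 / ENNReal.ofReal p + 1 / ENNReal.ofReal p' = 1 := by
    rw [one_div, one_div, ← ENNReal.ofReal_inv_of_pos hp0, ← ENNReal.ofReal_inv_of_pos hp'pos,
      ← ENNReal.ofReal_add (by positivity) (by positivity)]
    rw [inv_eq_one_div, inv_eq_one_div, hconj, ENNReal.ofReal_one]
  have hprod : Integrable (fun t => ‖v t‖ * ‖u t‖) μ := by
    have h := hu.norm.smul (φ := fun t => ‖v t‖) hv.norm (r := 1) (hpqr := ⟨by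
      rw [inv_one, add_comm]
      simpa only [one_div] using hPQ⟩)
    exact memLp_one_iff_integrable.mp h
  have hvTu_i : Integrable (fun t => v t (T (u t))) μ := by
    refine ((hprod.const_mul ‖T‖).mono' hvTu_m ?_)
    filter_upwards with t
    calc ‖v t (T (u t))‖ ≤ ‖v t‖ * ‖T (u t)‖ := (v t).le_opNorm _
      _ ≤ ‖v t‖ * (‖T‖ * ‖u t‖) := by
          gcongr
          exact T.le_opNorm _
      _ = ‖T‖ * (‖v t‖ * ‖u t‖) := by ring
  -- integrability of ‖T u‖ ^ p
  have hTu : MemLp (fun t => T (u t)) (ENNReal.ofReal p) μ := T.comp_memLp' hu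
  have hTunorm : Integrable (fun t => ‖T (u t)‖ ^ p) μ := by
    have h := hTu.integrable_norm_rpow (ENNReal.ofReal_pos.mpr hp0).ne' ENNReal.ofReal_ne_top
    simpa [ENNReal.toReal_ofReal hp0.le] using h
  -- interval integrability of v on [0, t]
  have hvIoc : ∀ t ∈ K, IntegrableOn v (Set.Ioc 0 t) volume := by
    intro t ht
    have hsub : Set.Ioc (0:ℝ) t ⊆ K := fun s hs => ⟨le_of_lt hs.1, hs.2.trans ht.2⟩
    have h := hvi.restrict (s := Set.Ioc 0 t)
    rwa [hμdef, Measure.restrict_restrict measurableSet_Ioc,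
      Set.inter_eq_self_of_subset_left hsub] at h
  have hvint : ∀ t ∈ K, IntervalIntegrable v volume 0 t := fun t ht =>
    (intervalIntegrable_iff_integrableOn_Ioc_of_le ht.1).mpr (hvIoc t ht)
  -- the double-variable kernel and the triangular region
  set G : ℝ × ℝ → ℝ := fun q => v q.2 (T (v q.1)) with hG
  set S : Set (ℝ × ℝ) := {q | q.1 ∈ Set.Ioc 0 q.2} with hS
  set S' : Set (ℝ × ℝ) := {q | q.2 ∈ Set.Ioc 0 q.1} with hS'
  have hSm : MeasurableSet S := by
    have : S = {q : ℝ × ℝ | 0 < q.1} ∩ {q : ℝ × ℝ | q.1 ≤ q.2} := rfl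
    rw [this]
    exact (measurableSet_lt measurable_const measurable_fst).inter
      (measurableSet_le measurable_fst measurable_snd)
  have hS'm : MeasurableSet S' := by
    have : S' = {q : ℝ × ℝ | 0 < q.2} ∩ {q : ℝ × ℝ | q.2 ≤ q.1} := rfl
    rw [this]
    exact (measurableSet_lt measurable_const measurable_snd).inter
      (measurableSet_le measurable_snd measurable_fst)
  have hGm : AEStronglyMeasurable G (μ.prod μ) :=
    happly.comp_aestronglyMeasurable
      ((hvm.comp_snd).prodMk (T.continuous.comp_aestronglyMeasurable hvm.comp_fst))
  have hGint : Integrable G (μ.prod μ) := by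
    have h2 : Integrable (fun q : ℝ × ℝ => ‖v q.1‖ * ‖v q.2‖) (μ.prod μ) :=
      hvi.norm.mul_prod hvi.norm
    refine (h2.const_mul ‖T‖).mono' hGm ?_
    filter_upwards with q
    calc ‖G q‖ = ‖v q.2 (T (v q.1))‖ := rfl
      _ ≤ ‖v q.2‖ * ‖T (v q.1)‖ := (v q.2).le_opNorm _
      _ ≤ ‖v q.2‖ * (‖T‖ * ‖v q.1‖) := by
          gcongr
          exact T.le_opNorm _
      _ = ‖T‖ * (‖v q.1‖ * ‖v q.2‖) := by ring
  have hFint : Integrable (S.indicator G) (μ.prod μ) := hGint.indicator hSm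
  have hF'int : Integrable (S'.indicator G) (μ.prod μ) := hGint.indicator hS'm
  -- total double integral of G vanishes
  have hGzero : ∫ q, G q ∂(μ.prod μ) = 0 := by
    have h := integral_integral (f := fun x y => v y (T (v x))) hGint
    rw [← h]
    have hinner : ∀ x : ℝ, (∫ y, v y (T (v x)) ∂μ) = 0 := by
      intro x
      have h2 := (ContinuousLinearMap.apply ℝ ℝ (T (v x))).integral_comp_comm hvi
      simpa [hVμ] using h2
    simp [hinner]
  -- swap symmetry
  have hswap : ∀ q : ℝ × ℝ, G (Prod.swap q) = G q := by
    intro q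
    exact hTsym (v q.1) (v q.2)
  have hF'eq : ∀ q : ℝ × ℝ, S'.indicator G q = (S.indicator G) (Prod.swap q) := by
    intro q
    by_cases h : q ∈ S'
    · rw [Set.indicator_of_mem h, Set.indicator_of_mem (show Prod.swap q ∈ S from h), hswap]
    · rw [Set.indicator_of_notMem h,
        Set.indicator_of_notMem (show Prod.swap q ∉ S from h)]
  have hswapint : ∫ q, S'.indicator G q ∂(μ.prod μ) = ∫ q, S.indicator G q ∂(μ.prod μ) := by
    calc ∫ q, S'.indicator G q ∂(μ.prod μ)
        = ∫ q, (S.indicator G) (Prod.swap q) ∂(μ.prod μ) := by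
          exact integral_congr_ae (Eventually.of_forall hF'eq)
      _ = ∫ q, S.indicator G q ∂(μ.prod μ) := integral_prod_swap _
  -- a.e. facts on the product
  have hIic : μ (Set.Iic 0) = 0 := by
    rw [hμdef, Measure.restrict_apply measurableSet_Iic]
    have h2 : Set.Iic (0:ℝ) ∩ K = {0} := by
      ext x
      simp only [Set.mem_inter_iff, Set.mem_Iic, hK, Set.mem_Icc, Set.mem_singleton_iff]
      constructor
      · rintro ⟨h3, h4, h5⟩; linarith
      · rintro rfl; exact ⟨le_rfl, le_rfl, hb.le⟩
    rw [h2]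
    exact Real.volume_singleton
  have hfst : ∀ᵐ q ∂(μ.prod μ), 0 < q.1 := by
    rw [ae_iff]
    have h1 : {q : ℝ × ℝ | ¬ 0 < q.1} = Set.Iic 0 ×ˢ (Set.univ : Set ℝ) := by
      ext q; simp [not_lt]
    rw [h1, Measure.prod_prod, hIic, zero_mul]
  have hsnd : ∀ᵐ q ∂(μ.prod μ), 0 < q.2 := by
    rw [ae_iff]
    have h1 : {q : ℝ × ℝ | ¬ 0 < q.2} = (Set.univ : Set ℝ) ×ˢ Set.Iic 0 := by
      ext q; simp [not_lt]
    rw [h1, Measure.prod_prod, hIic, mul_zero]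
  have hdiag : ∀ᵐ q ∂(μ.prod μ), q.1 ≠ q.2 := by
    rw [ae_iff]
    have hm : MeasurableSet {q : ℝ × ℝ | q.1 = q.2} :=
      measurableSet_eq_fun measurable_fst measurable_snd
    have h1 : {q : ℝ × ℝ | ¬ q.1 ≠ q.2} = {q : ℝ × ℝ | q.1 = q.2} := by
      ext q; simp
    rw [h1, Measure.prod_apply hm]
    have h2 : ∀ x : ℝ, μ (Prod.mk x ⁻¹' {q : ℝ × ℝ | q.1 = q.2}) = 0 := by
      intro x
      have h3 : Prod.mk x ⁻¹' {q : ℝ × ℝ | q.1 = q.2} = {x} := by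
        ext y; simp [eq_comm]
      rw [h3, hμdef, Measure.restrict_apply (measurableSet_singleton x)]
      exact measure_mono_null Set.inter_subset_left Real.volume_singleton
    simp [h2]
  have hsum : ∀ᵐ q ∂(μ.prod μ), S.indicator G q + S'.indicator G q = G q := by
    filter_upwards [hfst, hsnd, hdiag] with q hq1 hq2 hq3
    by_cases h : q.1 ≤ q.2
    · have hmem : q ∈ S := ⟨hq1, h⟩
      have hnot : q ∉ S' := fun hc => hq3 (le_antisymm h hc.2)
      rw [Set.indicator_of_mem hmem, Set.indicator_of_notMem hnot, add_zero]
    · push_neg at h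
      have hmem : q ∈ S' := ⟨hq2, h.le⟩
      have hnot : q ∉ S := fun hc => absurd hc.2 (not_le.mpr h)
      rw [Set.indicator_of_notMem hnot, Set.indicator_of_mem hmem, zero_add]
  -- the triangular double integral vanishes
  have hD : ∫ q, S.indicator G q ∂(μ.prod μ) = 0 := by
    have hadd : ∫ q, (S.indicator G q + S'.indicator G q) ∂(μ.prod μ)
        = ∫ q, G q ∂(μ.prod μ) := integral_congr_ae hsum
    rw [integral_add hFint hF'int, hswapint, hGzero] at hadd
    linarith
  -- pointwise decomposition of v(T u) on K
  have hptwise : ∀ t ∈ K, v t (T (u t))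
      = v t (T (u 0)) - ∫ s, S.indicator G (s, t) ∂μ := by
    intro t ht
    have hsub : Set.Ioc (0:ℝ) t ⊆ K := fun s hs => ⟨le_of_lt hs.1, hs.2.trans ht.2⟩
    have h1 : u t = u 0 - ∫ s in (0:ℝ)..t, v s := hrep t ht
    have h2 : v t (T (u t)) = v t (T (u 0)) - v t (T (∫ s in (0:ℝ)..t, v s)) := by
      rw [h1, map_sub, map_sub]
    rw [h2]
    congr 1
    have h3 : ((v t).comp T) (∫ s in (0:ℝ)..t, v s)
        = ∫ s in (0:ℝ)..t, ((v t).comp T) (v s) :=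
      (ContinuousLinearMap.intervalIntegral_comp_comm _ (hvint t ht)).symm
    have h4 : (∫ s in (0:ℝ)..t, ((v t).comp T) (v s))
        = ∫ s in Set.Ioc 0 t, v t (T (v s)) ∂volume := by
      rw [intervalIntegral.integral_of_le ht.1]
      simp only [ContinuousLinearMap.comp_apply]
    have h5 : volume.restrict (Set.Ioc 0 t) = μ.restrict (Set.Ioc 0 t) := by
      rw [hμdef, Measure.restrict_restrict measurableSet_Ioc,
        Set.inter_eq_self_of_subset_left hsub]
    have h6 : (∫ s in Set.Ioc 0 t, v t (T (v s)) ∂volume)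
        = ∫ s, (Set.Ioc 0 t).indicator (fun s => v t (T (v s))) s ∂μ := by
      rw [integral_indicator measurableSet_Ioc, h5]
    have h7 : ∀ s : ℝ, (Set.Ioc 0 t).indicator (fun s => v t (T (v s))) s
        = S.indicator G (s, t) := by
      intro s
      by_cases hs : s ∈ Set.Ioc 0 t
      · rw [Set.indicator_of_mem hs, Set.indicator_of_mem (show (s, t) ∈ S from hs)]
      · rw [Set.indicator_of_notMem hs,
          Set.indicator_of_notMem (show (s, t) ∉ S from hs)]
    calc v t (T (∫ s in (0:ℝ)..t, v s))
        = ((v t).comp T) (∫ s in (0:ℝ)..t, v s) :=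
          (ContinuousLinearMap.comp_apply (v t) T _).symm
      _ = ∫ s in (0:ℝ)..t, ((v t).comp T) (v s) := h3
      _ = ∫ s in Set.Ioc 0 t, v t (T (v s)) ∂volume := h4
      _ = ∫ s, (Set.Ioc 0 t).indicator (fun s => v t (T (v s))) s ∂μ := h6
      _ = ∫ s, S.indicator G (s, t) ∂μ := by
          exact integral_congr_ae (Eventually.of_forall h7)
  -- the key identity: ∫ v(T u) dμ = 0
  have hterm1 : Integrable (fun t => v t (T (u 0))) μ :=
    (ContinuousLinearMap.apply ℝ ℝ (T (u 0))).integrable_comp hvi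
  have huncurry : Integrable (Function.uncurry fun t s => S.indicator G (s, t)) (μ.prod μ) := by
    have : (Function.uncurry fun t s => S.indicator G (s, t)) = S'.indicator G := by
      funext q
      rw [hF'eq q]
      rfl
    rw [this]
    exact hF'int
  have hterm2 : Integrable (fun t => ∫ s, S.indicator G (s, t) ∂μ) μ := by
    have h := huncurry.integral_prod_left
    simpa using h
  have hkeyμ : ∫ t, v t (T (u t)) ∂μ = 0 := by
    have hcongr : ∫ t, v t (T (u t)) ∂μ
        = ∫ t, (v t (T (u 0)) - ∫ s, S.indicator G (s, t) ∂μ) ∂μ := by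
      refine integral_congr_ae ?_
      rw [hμdef]
      filter_upwards [ae_restrict_mem measurableSet_Icc] with t ht
      exact hptwise t ht
    rw [hcongr, integral_sub hterm1 hterm2]
    have e1 : ∫ t, v t (T (u 0)) ∂μ = 0 := by
      have h2 := (ContinuousLinearMap.apply ℝ ℝ (T (u 0))).integral_comp_comm hvi
      simpa [hVμ] using h2
    have e2 : ∫ t, (∫ s, S.indicator G (s, t) ∂μ) ∂μ = 0 := by
      have h3 := integral_integral (f := fun t s => S.indicator G (s, t)) huncurry
      rw [h3]
      have h4 : ∫ z : ℝ × ℝ, S.indicator G (z.2, z.1) ∂(μ.prod μ)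
          = ∫ q, S'.indicator G q ∂(μ.prod μ) := by
        refine integral_congr_ae (Eventually.of_forall fun q => ?_)
        rw [hF'eq q]
        rfl
      rw [show (∫ z : ℝ × ℝ, (fun t s => S.indicator G (s, t)) z.1 z.2 ∂(μ.prod μ))
        = ∫ z : ℝ × ℝ, S.indicator G (z.2, z.1) ∂(μ.prod μ) from rfl, h4, hswapint, hD]
    rw [e1, e2, sub_zero]
  -- coercivity and conclusion
  have hae_co : ∀ᵐ t ∂μ, c₃ * ‖T (u t)‖ ^ p - c₄ t ≤ v t (T (u t)) := by
    filter_upwards [hcoercive, hsel] with t h1 h2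
    exact h1 (T (u t)) (v t) h2
  have hint : ∫ t, (c₃ * ‖T (u t)‖ ^ p - c₄ t) ∂μ ≤ ∫ t, v t (T (u t)) ∂μ :=
    integral_mono_ae ((hTunorm.const_mul c₃).sub hc₄) hvTu_i hae_co
  rw [hkeyμ, integral_sub (hTunorm.const_mul c₃) hc₄, integral_const_mul] at hint
  have h4 : ∫ t, c₄ t ∂μ ≤ ∫ t, |c₄ t| ∂μ :=
    integral_mono hc₄ hc₄.abs fun t => le_abs_self _
  linarith
end

section
/- Let (X, H, X*) be an evolution triple of Hilbert spaces, let T = [0,b], assume hypotheses H(B) and H(A), and fix ε > 0. Then there exists a constant c₅ > 0 (depending only on ε, B, c₃ and p) such that for every u ∈ L^p(T, V*) and every v ∈ Â_ε(u), ((v, u))_* = ∫₀ᵇ (v(t), u(t))_* dt ≥ c₅ ‖u‖_{L^p(T, V*)}^p − ‖c₄‖_{L¹(T)}; in particular, the Nemitsky map Â_ε is coercive on L^p(T, V*). -/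
/- STATEMENT 12: Coercivity of the Nemitsky map Â_ε: there is c₅ > 0 (depending
only on ε, B, c₃, p) such that for all u ∈ L^p(T,V*) and v ∈ Â_ε(u),
((v,u))_* ≥ c₅ ‖u‖_{L^p(T,V*)}^p − ‖c₄‖_{L¹(T)}.

X* is realized as `X →L[ℝ] ℝ`; (a,c)_* = ⟨(εJ+B)⁻¹a, c⟩ = c (T a) is the V*-inner
product, so ((v,u))_* = ∫₀ᵇ (u t) (T (v t)) dt, the V*-norm is
|w|_* = √((w,w)_*) = √(w (T w)), and ‖u‖_{L^p(T,V*)}^p = ∫₀ᵇ |u t|_*^p dt;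
A_ε(t,w) = A t (T w). -/

open MeasureTheory Filter Topology RealInnerProductSpace

theorem statement_12
    {X H : Type*} [NormedAddCommGroup X] [InnerProductSpace ℝ X] [CompleteSpace X]
    [NormedAddCommGroup H] [InnerProductSpace ℝ H] [CompleteSpace H]
    [TopologicalSpace.SeparableSpace X] [TopologicalSpace.SeparableSpace H]
    -- evolution triple of Hilbert spaces: e : X → H injective, continuous, dense range,
    
    (e : X →L[ℝ] H) (he : Function.Injective e) (hdense : DenseRange e)
    (b : ℝ) (hb : 0 < b)
    (p p' : ℝ) (hp : 2 ≤ p) (hconj : 1 / p + 1 / p' = 1)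
    (A : ℝ → X → Set (X →L[ℝ] ℝ))
    -- H(A): nonempty, closed, convex values
    (hval : ∀ t ∈ Set.Icc (0:ℝ) b, ∀ x : X,
      (A t x).Nonempty ∧ IsClosed (A t x) ∧ Convex ℝ (A t x))
    -- H(A)(i): t ↦ A(t,x) is graph measurable (Lebesgue ⊗ Borel)
    (hmeas : ∀ x : X, MeasurableSet[MeasurableSpace.prod
      (inferInstance : MeasurableSpace (MeasureTheory.NullMeasurableSpace ℝ MeasureTheory.volume))
      (borel (X →L[ℝ] ℝ))]
      {q : ℝ × (X →L[ℝ] ℝ) | q.1 ∈ Set.Icc (0:ℝ) b ∧ q.2 ∈ A q.1 x})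
    -- H(A)(ii): for a.a. t ∈ T, x ↦ A(t,x) is pseudo-monotone (bounded and
    -- satisfying the pseudo-monotonicity limit condition; weak convergence in X is
    -- tested against X*, weak convergence in X* against X**)
    (hpm : ∀ᵐ t ∂(volume.restrict (Set.Icc (0:ℝ) b)),
      (∀ S : Set X, Bornology.IsBounded S → Bornology.IsBounded (⋃ x ∈ S, A t x)) ∧
      (∀ (y : ℕ → X) (ylim : X) (w : ℕ → X →L[ℝ] ℝ) (wlim : X →L[ℝ] ℝ),
        (∀ f : X →L[ℝ] ℝ, Tendsto (fun n => f (y n)) atTop (nhds (f ylim))) →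
        (∀ n, w n ∈ A t (y n)) →
        (∀ F : (X →L[ℝ] ℝ) →L[ℝ] ℝ, Tendsto (fun n => F (w n)) atTop (nhds (F wlim))) →
        limsup (fun n => w n (y n - ylim)) atTop ≤ 0 →
        wlim ∈ A t ylim ∧ Tendsto (fun n => w n (y n)) atTop (nhds (wlim ylim))))
    -- H(A)(iii): growth condition
    (c₁ : ℝ → ℝ) (c₂ : ℝ)
    (hc₁ : MemLp c₁ (ENNReal.ofReal p') (volume.restrict (Set.Icc (0:ℝ) b)))
    (hc₂ : 0 < c₂)
    (hgrowth : ∀ᵐ t ∂(volume.restrict (Set.Icc (0:ℝ) b)), ∀ x : X, ∀ w ∈ A t x,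
      ‖w‖ ≤ c₁ t + c₂ * ‖x‖ ^ (p - 1))
    -- H(A)(iv): coercivity condition
    (c₃ : ℝ) (c₄ : ℝ → ℝ) (hc₃ : 0 < c₃)
    (hc₄ : Integrable c₄ (volume.restrict (Set.Icc (0:ℝ) b)))
    (hcoercive : ∀ᵐ t ∂(volume.restrict (Set.Icc (0:ℝ) b)), ∀ x : X, ∀ w ∈ A t x,
      c₃ * ‖x‖ ^ p - c₄ t ≤ w x)
    -- H(B): B ∈ L(X, X*) symmetric and monotone
    (B : X →L[ℝ] (X →L[ℝ] ℝ))
    (hBsymm : ∀ x y : X, B x y = B y x) (hBmono : ∀ x : X, 0 ≤ B x x)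
    -- ε > 0 and T = (εJ + B)⁻¹ : X* → X, the continuous inverse of εJ + B
    -- (J = innerSL ℝ is the Riesz duality map of X)
    (ε : ℝ) (hε : 0 < ε)
    (T : (X →L[ℝ] ℝ) →L[ℝ] X)
    (hT₁ : ∀ x : X, T (ε • (innerSL ℝ x : X →L[ℝ] ℝ) + B x) = x)
    (hT₂ : ∀ f : X →L[ℝ] ℝ, ε • (innerSL ℝ (T f) : X →L[ℝ] ℝ) + B (T f) = f)
    :
    ∃ c₅ : ℝ, 0 < c₅ ∧
      ∀ u v : ℝ → X →L[ℝ] ℝ,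
        MemLp u (ENNReal.ofReal p) (volume.restrict (Set.Icc (0:ℝ) b)) →
        MemLp v (ENNReal.ofReal p') (volume.restrict (Set.Icc (0:ℝ) b)) →
        (∀ᵐ t ∂(volume.restrict (Set.Icc (0:ℝ) b)), v t ∈ A t (T (u t))) →
        c₅ * (∫ t in Set.Icc (0:ℝ) b, Real.sqrt ((u t) (T (u t))) ^ p)
            - ∫ t in Set.Icc (0:ℝ) b, |c₄ t|
          ≤ ∫ t in Set.Icc (0:ℝ) b, (u t) (T (v t)) := by
  
  classical
  set μ := volume.restrict (Set.Icc (0:ℝ) b) with hμ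
  have hp0 : (0:ℝ) < p := lt_of_lt_of_le two_pos hp
  have hp'0 : (0:ℝ) < p' := by
    have h2 : 1 / p < 1 := by rw [div_lt_one hp0]; linarith
    have h3 : 0 < 1 / p' := by linarith
    exact (one_div_pos).mp h3
  -- symmetry of the V* inner product
  have hsym : ∀ f g : X →L[ℝ] ℝ, f (T g) = g (T f) := by
    intro f g
    conv_lhs => rw [← hT₂ f]
    conv_rhs => rw [← hT₂ g]
    simp only [ContinuousLinearMap.add_apply, ContinuousLinearMap.coe_smul',
      Pi.smul_apply, innerSL_apply_apply, smul_eq_mul]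
    rw [real_inner_comm, hBsymm]
  -- positivity of the V* quadratic form
  have hquad : ∀ f : X →L[ℝ] ℝ, f (T f) = ε * ⟪T f, T f⟫ + B (T f) (T f) := by
    intro f
    have h := congrArg (fun g : X →L[ℝ] ℝ => g (T f)) (hT₂ f)
    simp only [ContinuousLinearMap.add_apply, ContinuousLinearMap.coe_smul',
      Pi.smul_apply, innerSL_apply_apply, smul_eq_mul] at h
    exact h.symm
  have hpos : ∀ f : X →L[ℝ] ℝ, 0 ≤ f (T f) := by
    intro f
    rw [hquad f]
    have := hBmono (T f)
    have : 0 ≤ ε * ⟪T f, T f⟫ := mul_nonneg hε.le real_inner_self_nonneg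
    positivity
  have hBnn : (0:ℝ) ≤ ε + ‖B‖ := by positivity
  -- upper bound of quadratic form by (ε + ‖B‖) ‖T f‖²
  have hKb : ∀ f : X →L[ℝ] ℝ, f (T f) ≤ (ε + ‖B‖) * ‖T f‖ ^ 2 := by
    intro f
    rw [hquad f, real_inner_self_eq_norm_sq]
    have h1 : B (T f) (T f) ≤ ‖B‖ * ‖T f‖ ^ 2 := by
      calc B (T f) (T f) ≤ ‖B (T f) (T f)‖ := le_abs_self _
        _ ≤ ‖B (T f)‖ * ‖T f‖ := ContinuousLinearMap.le_opNorm _ _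
        _ ≤ (‖B‖ * ‖T f‖) * ‖T f‖ :=
            mul_le_mul_of_nonneg_right (ContinuousLinearMap.le_opNorm _ _) (norm_nonneg _)
        _ = ‖B‖ * ‖T f‖ ^ 2 := by ring
    nlinarith [norm_nonneg (T f), hε.le]
  -- sqrt bound
  have hsqrt : ∀ f : X →L[ℝ] ℝ, Real.sqrt (f (T f)) ≤ Real.sqrt (ε + ‖B‖) * ‖T f‖ := by
    intro f
    calc Real.sqrt (f (T f)) ≤ Real.sqrt ((ε + ‖B‖) * ‖T f‖ ^ 2) :=
          Real.sqrt_le_sqrt (hKb f)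
      _ = Real.sqrt (ε + ‖B‖) * ‖T f‖ := by
          rw [Real.sqrt_mul hBnn, Real.sqrt_sq (norm_nonneg _)]
  refine ⟨c₃ / (ε + ‖B‖) ^ (p / 2), by positivity, ?_⟩
  intro u v hu hv hvA
  set c₅ := c₃ / (ε + ‖B‖) ^ (p / 2) with hc₅def
  have hc₅ : 0 < c₅ := by positivity
  -- pointwise: c₅ √(u(Tu))^p ≤ c₃ ‖T (u t)‖^p
  have hptA : ∀ f : X →L[ℝ] ℝ, c₅ * Real.sqrt (f (T f)) ^ p ≤ c₃ * ‖T f‖ ^ p := by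
    intro f
    have h1 : Real.sqrt (f (T f)) ^ p ≤ (Real.sqrt (ε + ‖B‖) * ‖T f‖) ^ p :=
      Real.rpow_le_rpow (Real.sqrt_nonneg _) (hsqrt f) hp0.le
    have h2 : (Real.sqrt (ε + ‖B‖) * ‖T f‖) ^ p
        = (ε + ‖B‖) ^ (p / 2) * ‖T f‖ ^ p := by
      rw [Real.mul_rpow (Real.sqrt_nonneg _) (norm_nonneg _),
        Real.sqrt_eq_rpow, ← Real.rpow_mul hBnn]
      ring_nf
    have h3 : c₅ * ((ε + ‖B‖) ^ (p / 2) * ‖T f‖ ^ p) = c₃ * ‖T f‖ ^ p := by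
      have hKne : (ε + ‖B‖) ^ (p / 2) ≠ 0 := by positivity
      rw [hc₅def]
      field_simp
    calc c₅ * Real.sqrt (f (T f)) ^ p ≤ c₅ * ((Real.sqrt (ε + ‖B‖) * ‖T f‖) ^ p) :=
          mul_le_mul_of_nonneg_left h1 hc₅.le
      _ = c₃ * ‖T f‖ ^ p := by rw [h2, h3]
  -- measurability helpers
  have hTcont : Continuous fun w : X →L[ℝ] ℝ => w (T w) := by
    have : Continuous fun q : (X →L[ℝ] ℝ) × X => q.1 q.2 :=
      isBoundedBilinearMap_apply.continuous
    exact this.comp (continuous_id.prodMk T.continuous)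
  have hf_aesm : AEStronglyMeasurable (fun t => Real.sqrt ((u t) (T (u t))) ^ p) μ := by
    have hcont : Continuous fun w : X →L[ℝ] ℝ => Real.sqrt (w (T w)) ^ p := by
      apply Continuous.rpow_const (Real.continuous_sqrt.comp hTcont)
      intro w; exact Or.inr hp0.le
    exact hcont.comp_aestronglyMeasurable hu.1
  have hg_aesm : AEStronglyMeasurable (fun t => (u t) (T (v t))) μ := by
    have hcont : Continuous fun q : (X →L[ℝ] ℝ) × (X →L[ℝ] ℝ) => q.1 (T q.2) := by
      have h1 : Continuous fun q : (X →L[ℝ] ℝ) × X => q.1 q.2 :=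
        isBoundedBilinearMap_apply.continuous
      exact h1.comp (continuous_fst.prodMk (T.continuous.comp continuous_snd))
    exact hcont.comp_aestronglyMeasurable (hu.1.prodMk hv.1)
  -- integrability of ‖u‖^p
  have hpne0 : ENNReal.ofReal p ≠ 0 := by
    simp [ENNReal.ofReal_eq_zero, not_le, hp0]
  have hu_norm_int : Integrable (fun t => ‖u t‖ ^ p) μ := by
    have := hu.integrable_norm_rpow hpne0 ENNReal.ofReal_ne_top
    simpa [ENNReal.toReal_ofReal hp0.le] using this
  -- integrability of f
  have hf_int : Integrable (fun t => Real.sqrt ((u t) (T (u t))) ^ p) μ := by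
    refine Integrable.mono' (hu_norm_int.const_mul ((Real.sqrt (ε + ‖B‖) * ‖T‖) ^ p))
      hf_aesm ?_
    filter_upwards with t
    have h0 : 0 ≤ Real.sqrt ((u t) (T (u t))) ^ p :=
      Real.rpow_nonneg (Real.sqrt_nonneg _) _
    rw [Real.norm_eq_abs, abs_of_nonneg h0]
    have h1 : Real.sqrt ((u t) (T (u t))) ≤ Real.sqrt (ε + ‖B‖) * ‖T‖ * ‖u t‖ := by
      refine (hsqrt (u t)).trans ?_
      rw [mul_assoc]
      exact mul_le_mul_of_nonneg_left (T.le_opNorm _) (Real.sqrt_nonneg _)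
    calc Real.sqrt ((u t) (T (u t))) ^ p
        ≤ (Real.sqrt (ε + ‖B‖) * ‖T‖ * ‖u t‖) ^ p :=
          Real.rpow_le_rpow (Real.sqrt_nonneg _) h1 hp0.le
      _ = (Real.sqrt (ε + ‖B‖) * ‖T‖) ^ p * ‖u t‖ ^ p :=
          Real.mul_rpow (by positivity) (norm_nonneg _)
  -- integrability of g via Hölder
  have hpqr : (1 : ENNReal) / 1 = 1 / ENNReal.ofReal p' + 1 / ENNReal.ofReal p := by
    rw [one_div, one_div, one_div,
      ← ENNReal.ofReal_inv_of_pos hp'0, ← ENNReal.ofReal_inv_of_pos hp0,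
      ← ENNReal.ofReal_add (by positivity) (by positivity)]
    rw [show p'⁻¹ + p⁻¹ = 1 by
      rw [inv_eq_one_div, inv_eq_one_div]; linarith]
    simp
  have hprod_int : Integrable (fun t => ‖v t‖ * ‖u t‖) μ := by
    have h := (hu.norm).smul (hv.norm) (r := 1) (hpqr := ⟨by simpa [one_div] using hpqr.symm⟩)
    rw [memLp_one_iff_integrable] at h
    simpa [smul_eq_mul, Pi.mul_def] using h
  have hg_int : Integrable (fun t => (u t) (T (v t))) μ := by
    refine Integrable.mono' ((hprod_int.const_mul ‖T‖)) hg_aesm ?_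
    filter_upwards with t
    calc ‖(u t) (T (v t))‖ ≤ ‖u t‖ * ‖T (v t)‖ := (u t).le_opNorm _
      _ ≤ ‖u t‖ * (‖T‖ * ‖v t‖) :=
          mul_le_mul_of_nonneg_left (T.le_opNorm _) (norm_nonneg _)
      _ = ‖T‖ * (‖v t‖ * ‖u t‖) := by ring
  -- pointwise a.e. inequality
  have hae : ∀ᵐ t ∂μ, c₅ * Real.sqrt ((u t) (T (u t))) ^ p - |c₄ t| ≤ (u t) (T (v t)) := by
    filter_upwards [hcoercive, hvA] with t hco hvt
    have h1 : c₃ * ‖T (u t)‖ ^ p - c₄ t ≤ (v t) (T (u t)) := hco (T (u t)) (v t) hvt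
    have h2 : c₅ * Real.sqrt ((u t) (T (u t))) ^ p ≤ c₃ * ‖T (u t)‖ ^ p := hptA (u t)
    have h3 : c₄ t ≤ |c₄ t| := le_abs_self _
    rw [hsym (u t) (v t)]
    linarith
  -- conclude
  have hlhs_int : Integrable (fun t => c₅ * Real.sqrt ((u t) (T (u t))) ^ p - |c₄ t|) μ :=
    (hf_int.const_mul c₅).sub hc₄.abs
  calc c₅ * (∫ t in Set.Icc (0:ℝ) b, Real.sqrt ((u t) (T (u t))) ^ p)
        - ∫ t in Set.Icc (0:ℝ) b, |c₄ t|
      = ∫ t in Set.Icc (0:ℝ) b,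
          (c₅ * Real.sqrt ((u t) (T (u t))) ^ p - |c₄ t|) := by
        rw [integral_sub (hf_int.const_mul c₅) hc₄.abs, integral_const_mul]
    _ ≤ ∫ t in Set.Icc (0:ℝ) b, (u t) (T (v t)) :=
        integral_mono_ae hlhs_int hg_int hae
end
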